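/- Any derivation D ∈ End(ℝ⁴) (ℝ⁴ ≅ Sym³ℝ²) whose flow preserves the twisted cubic cone — precisely, any D such that for every s,t the vector D(t³, t²s, ts², s³) lies in the tangent plane span{(3t², 2ts, s², 0), (0, t², 2ts, 3s²)} — belongs to the image ρ'(gl(2,ℝ)) of the differential of the third symmetric power representation; conversely every element of ρ'(gl(2,ℝ)) has this property. In particular this subalgebra of End(ℝ⁴) is 4-dimensional. -/

import Mathlib

open Matrix

/-!
Write `v(t, s) = (t³, t²s, ts², s³)`. For `X ∈ gl(2,ℝ)`, `ρ'(X) v(t, s)` is the derivative of `v`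
along the linear vector field `X (t, s)`, hence lies in the tangent plane spanned by `∂ₜv, ∂ₛv`.
Conversely, reading `w ∈ ℝ⁴` as the binary cubic `w₀x³ + 3w₁x²y + 3w₂xy² + w₃y³`, the point
`v(t, s)` is `(tx + sy)³` and the tangent plane consists of the multiples of `(tx + sy)²`, which
are killed by the two partial derivatives at the root `(s, -t)` (the apolarity conditions).
Applied to `D v(t, s)` at six sample points, these give twelve independent linear conditions
on `D`, leaving exactly the image of `ρ'`.
-/

/-- The differential `ρ' : gl(2,ℝ) → End(ℝ⁴)` of the third symmetric power
representation. -/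
def rho' (X : Matrix (Fin 2) (Fin 2) ℝ) : Matrix (Fin 4) (Fin 4) ℝ :=
  let a := X 0 0; let b := X 0 1; let c := X 1 0; let d := X 1 1
  !![3 * a, 3 * b, 0, 0;
     c, 2 * a + d, 2 * b, 0;
     0, 2 * c, a + 2 * d, b;
     0, 0, 3 * c, 3 * d]

def twistedCubic (t s : ℝ) : Fin 4 → ℝ := ![t ^ 3, t ^ 2 * s, t * s ^ 2, s ^ 3]

def twistedCubicDerivT (t s : ℝ) : Fin 4 → ℝ := ![3 * t ^ 2, 2 * t * s, s ^ 2, 0]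

def twistedCubicDerivS (t s : ℝ) : Fin 4 → ℝ := ![0, t ^ 2, 2 * t * s, 3 * s ^ 2]

def InfPreservesTwistedCubic (D : Matrix (Fin 4) (Fin 4) ℝ) : Prop :=
  ∀ t s : ℝ, ∃ u v : ℝ,
    D *ᵥ twistedCubic t s = u • twistedCubicDerivT t s + v • twistedCubicDerivS t s

theorem rho'_mulVec_twistedCubic (X : Matrix (Fin 2) (Fin 2) ℝ) (t s : ℝ) :
    rho' X *ᵥ twistedCubic t s =
      (X 0 0 * t + X 0 1 * s) • twistedCubicDerivT t s +
        (X 1 0 * t + X 1 1 * s) • twistedCubicDerivS t s := by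
  ext i
  fin_cases i <;> simp [rho', twistedCubic, twistedCubicDerivT, twistedCubicDerivS,
    mulVec, dotProduct, Fin.sum_univ_four] <;> ring

theorem infPreservesTwistedCubic_rho' (X : Matrix (Fin 2) (Fin 2) ℝ) :
    InfPreservesTwistedCubic (rho' X) :=
  fun t s => ⟨_, _, rho'_mulVec_twistedCubic X t s⟩

theorem rho'_injective : Function.Injective rho' := by
  intro X Y h
  have h00 := congrFun₂ h 0 0
  have h01 := congrFun₂ h 0 1
  have h10 := congrFun₂ h 1 0
  have h33 := congrFun₂ h 3 3
  simp only [rho', of_apply, cons_val', cons_val_zero, cons_val_one, cons_val_fin_one,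
    cons_val, mul_eq_mul_left_iff, OfNat.ofNat_ne_zero, or_false] at h00 h01 h10 h33
  ext i j
  fin_cases i <;> fin_cases j <;> simp [h00, h01, h10, h33]

theorem apolar_eq_zero_of_eq_tangent {t s u v : ℝ} {w : Fin 4 → ℝ}
    (hw : w = u • twistedCubicDerivT t s + v • twistedCubicDerivS t s) :
    w 0 * s ^ 2 - 2 * w 1 * t * s + w 2 * t ^ 2 = 0 ∧
      w 1 * s ^ 2 - 2 * w 2 * t * s + w 3 * t ^ 2 = 0 := by
  subst hw
  constructor <;> simp [twistedCubicDerivT, twistedCubicDerivS] <;> ring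

theorem apolar_mulVec_twistedCubic_eq_zero {D : Matrix (Fin 4) (Fin 4) ℝ}
    (hD : InfPreservesTwistedCubic D) (t s : ℝ) :
    let w := D *ᵥ twistedCubic t s
    w 0 * s ^ 2 - 2 * w 1 * t * s + w 2 * t ^ 2 = 0 ∧
      w 1 * s ^ 2 - 2 * w 2 * t * s + w 3 * t ^ 2 = 0 :=
  have ⟨_, _, hw⟩ := hD t s
  apolar_eq_zero_of_eq_tangent hw

theorem exists_eq_rho'_of_infPreservesTwistedCubic {D : Matrix (Fin 4) (Fin 4) ℝ}
    (hD : InfPreservesTwistedCubic D) : ∃ X, D = rho' X := by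
  have h := apolar_mulVec_twistedCubic_eq_zero hD
  obtain ⟨e1, e2⟩ := h 1 0
  obtain ⟨e3, e4⟩ := h 0 1
  obtain ⟨e5, e6⟩ := h 1 1
  obtain ⟨e7, e8⟩ := h 1 (-1)
  obtain ⟨e9, e10⟩ := h 2 1
  obtain ⟨e11, e12⟩ := h 1 2
  simp only [twistedCubic, mulVec, dotProduct, Fin.sum_univ_four, cons_val_zero, cons_val_one,
    cons_val] at e1 e2 e3 e4 e5 e6 e7 e8 e9 e10 e11 e12
  refine ⟨!![D 0 0 / 3, D 0 1 / 3; D 1 0, D 3 3 / 3], ?_⟩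
  ext i j
  fin_cases i <;> fin_cases j <;> simp [rho'] <;> linarith

/-- A linear map of `ℝ⁴` infinitesimally preserves the twisted cubic cone (maps each of
its points into the tangent plane at that point) iff it lies in the image of `ρ'`;
moreover `ρ'` is injective, so this subalgebra is 4-dimensional. -/
theorem infinitesimal_automorphisms_of_twisted_cubic :
    (∀ D : Matrix (Fin 4) (Fin 4) ℝ,
      (∀ t s : ℝ, ∃ u v : ℝ,
        D.mulVec ![t ^ 3, t ^ 2 * s, t * s ^ 2, s ^ 3] =
          u • ![3 * t ^ 2, 2 * t * s, s ^ 2, 0] + v • ![0, t ^ 2, 2 * t * s, 3 * s ^ 2]) ↔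
      ∃ X : Matrix (Fin 2) (Fin 2) ℝ, D = rho' X) ∧
    Function.Injective rho' := by
  refine ⟨fun D => ⟨exists_eq_rho'_of_infPreservesTwistedCubic, ?_⟩, rho'_injective⟩
  rintro ⟨X, rfl⟩
  exact infPreservesTwistedCubic_rho' X
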